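/- arXiv:1703.08900 — 2 statements merged into one kernel-verified Lean document; each statement's English description precedes it below -/
import Mathlib

section
/- Let F, Z, m be integers with 0 ≤ Z < F and m ≥ 1. Then a (m·C(F,Z), F, Z, m·C(F,Z+1))-PDA exists, and no (m·C(F,Z)+1, F, Z, m·C(F,Z+1))-PDA exists; that is, K_{(F,F−Z,m·C(F,Z+1))} = m·C(F,Z), where C(n,k) denotes the binomial coefficient. -/
/-!
Count the non-star cells twice. Each column has `F - Z` of them. A symbol occurring at `(a, b)`
can occur again only in rows where column `b` has a star, at most once per row, so it occurs at
most `Z + 1` times. Hence `K (F - Z) ≤ S (Z + 1)`, and since `(Z + 1) C(F, Z + 1) = (F - Z) C(F, Z)`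
this caps `K` at `m C(F, Z)`, which `m` disjoint copies of the Maddah-Ali–Niesen array attain.
-/

/-- A `(K, F, Z, S)` placement delivery array: an `F × K` array over
`{0, …, S-1} ∪ {*}` (with `none` playing the role of `*`) such that
(1) each integer occurs at most once in each row and in each column,
(2) whenever two distinct cells `(a, b)` and `(c, d)` contain the same
integer, the opposite corners `(a, d)` and `(c, b)` contain `*`, and
(3) the symbol `*` occurs exactly `Z` times in each column. -/
def IsPDA (K F Z S : ℕ) (P : Fin F → Fin K → Option (Fin S)) : Prop :=
  (∀ (i : Fin F) (j j' : Fin K) (s : Fin S), P i j = some s → P i j' = some s → j = j') ∧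
  (∀ (i i' : Fin F) (j : Fin K) (s : Fin S), P i j = some s → P i' j = some s → i = i') ∧
  (∀ (a c : Fin F) (b d : Fin K) (s : Fin S),
      (a, b) ≠ (c, d) → P a b = some s → P c d = some s →
      P a d = none ∧ P c b = none) ∧
  (∀ j : Fin K, (Finset.univ.filter (fun i => P i j = none)).card = Z)

/-- There exists a `(K, F, Z, S)` placement delivery array. -/
def PDAExists (K F Z S : ℕ) : Prop :=
  ∃ P : Fin F → Fin K → Option (Fin S), IsPDA K F Z S P

open Finset

variable {ι κ σ : Type*}

/-- `IsPDA K F Z S` with rows, columns and symbols indexed by arbitrary types. -/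
structure IsPDAOn [Fintype ι] (Z : ℕ) (P : ι → κ → Option σ) : Prop where
  col_unique : ∀ i j j' s, P i j = some s → P i j' = some s → j = j'
  row_unique : ∀ i i' j s, P i j = some s → P i' j = some s → i = i'
  none_of_eq : ∀ a c b d s, (a, b) ≠ (c, d) → P a b = some s → P c d = some s →
    P a d = none ∧ P c b = none
  card_none : ∀ j, #{i | P i j = none} = Z

theorem isPDA_iff {K F Z S : ℕ} {P : Fin F → Fin K → Option (Fin S)} :
    IsPDA K F Z S P ↔ IsPDAOn Z P :=
  ⟨fun ⟨h₁, h₂, h₃, h₄⟩ => ⟨h₁, h₂, h₃, h₄⟩, fun h => ⟨h.1, h.2, h.3, h.4⟩⟩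

namespace IsPDAOn

variable [Fintype ι] {Z : ℕ} {P : ι → κ → Option σ}

theorem comp_embedding {κ' σ' : Type*} (h : IsPDAOn Z P) (g : κ' ↪ κ) (f : σ ↪ σ') :
    IsPDAOn Z fun i j => (P i (g j)).map f := by
  have hsome : ∀ i j s, (P i (g j)).map f = some (f s) ↔ P i (g j) = some s := by
    simp [Option.map_eq_some_iff, f.injective.eq_iff]
  refine ⟨fun i j j' s h₁ h₂ => ?_, fun i i' j s h₁ h₂ => ?_, fun a c b d s hne h₁ h₂ => ?_, ?_⟩
  · obtain ⟨t, ht, rfl⟩ := Option.map_eq_some_iff.1 h₁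
    exact g.injective (h.col_unique i _ _ t ht ((hsome i j' t).1 h₂))
  · obtain ⟨t, ht, rfl⟩ := Option.map_eq_some_iff.1 h₁
    exact h.row_unique i i' _ t ht ((hsome i' j t).1 h₂)
  · obtain ⟨t, ht, rfl⟩ := Option.map_eq_some_iff.1 h₁
    have hne' : (a, g b) ≠ (c, g d) := by simpa [g.injective.eq_iff] using hne
    simpa using h.none_of_eq a c (g b) (g d) t hne' ht ((hsome c d t).1 h₂)
  · intro j; simpa using h.card_none (g j)

theorem card_filter_eq_some_le [Fintype κ] [DecidableEq σ] (h : IsPDAOn Z P) (s : σ) :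
    #{p : ι × κ | P p.1 p.2 = some s} ≤ Z + 1 := by
  classical
  set A : Finset (ι × κ) := {p | P p.1 p.2 = some s}
  have hA : ∀ p ∈ A, P p.1 p.2 = some s := fun p hp => (mem_filter.1 hp).2
  obtain hA₀ | ⟨p₀, hp₀⟩ := A.eq_empty_or_nonempty
  · simp [hA₀]
  -- every other occurrence of `s` lies in its own row and forces a star in column `p₀.2`
  have hle : #(A.erase p₀) ≤ #{i | P i p₀.2 = none} := by
    refine card_le_card_of_injOn Prod.fst (fun p hp => ?_) (fun p hp q hq hpq => ?_)
    · have hp' := mem_erase.1 hp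
      simpa using (h.none_of_eq p.1 p₀.1 p.2 p₀.2 s hp'.1 (hA p hp'.2) (hA p₀ hp₀)).1
    · have hp' := hA p (mem_of_mem_erase hp)
      rw [show p.1 = q.1 from hpq] at hp'
      exact Prod.ext hpq (h.col_unique q.1 p.2 q.2 s hp' (hA q (mem_of_mem_erase hq)))
  rw [h.card_none, card_erase_of_mem hp₀] at hle
  omega

theorem card_filter_eq_none [Fintype κ] (h : IsPDAOn Z P) :
    #{p : ι × κ | P p.1 p.2 = none} = Z * Fintype.card κ := by
  rw [card_filter, Fintype.sum_prod_type_right]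
  simp [h.card_none, mul_comm]

theorem card_mul_sub_le [Fintype κ] [Fintype σ] (h : IsPDAOn Z P) :
    Fintype.card κ * (Fintype.card ι - Z) ≤ (Z + 1) * Fintype.card σ := by
  classical
  have hsplit : Fintype.card ι * Fintype.card κ =
      Z * Fintype.card κ + ∑ s, #{p : ι × κ | P p.1 p.2 = some s} := by
    rw [← h.card_filter_eq_none, ← Fintype.card_prod, ← card_univ,
      card_eq_sum_card_fiberwise (f := fun p => P p.1 p.2) (t := univ) (by simp),
      Fintype.sum_option]
  have hsum : ∑ s, #{p : ι × κ | P p.1 p.2 = some s} ≤ (Z + 1) * Fintype.card σ :=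
    (sum_le_sum fun s _ => h.card_filter_eq_some_le s).trans_eq (by simp [mul_comm])
  rw [Nat.mul_sub, mul_comm _ (Fintype.card ι), mul_comm _ Z]
  omega

end IsPDAOn

theorem PDAExists.of_isPDAOn {K F Z S : ℕ} [Fintype κ] [Fintype σ] {P : Fin F → κ → Option σ}
    (hP : IsPDAOn Z P) (hK : K ≤ Fintype.card κ) (hS : Fintype.card σ ≤ S) :
    PDAExists K F Z S := by
  obtain ⟨g⟩ := Function.Embedding.nonempty_of_card_le (α := Fin K) (by simpa using hK)
  obtain ⟨f⟩ := Function.Embedding.nonempty_of_card_le (β := Fin S) (by simpa using hS)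
  exact ⟨_, isPDA_iff.2 (hP.comp_embedding g f)⟩

theorem PDAExists.mul_sub_le {K F Z S : ℕ} (h : PDAExists K F Z S) :
    K * (F - Z) ≤ (Z + 1) * S := by
  obtain ⟨P, hP⟩ := h
  simpa using (isPDA_iff.1 hP).card_mul_sub_le

theorem Finset.mem_of_insert_eq_insert {α : Type*} [DecidableEq α] {a b : α} {s t : Finset α}
    (h : insert a s = insert b t) (hab : a ≠ b) : a ∈ t := by
  have := h ▸ mem_insert_self a s
  simpa [hab] using this

section MaddahAliNiesen

variable (γ ι : Type*) [DecidableEq ι] (Z : ℕ)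

/-- The Maddah-Ali–Niesen array, repeated over `γ` disjoint sets of symbols: column `(c, B)`
has stars in the rows of `B` and symbol `(c, B ∪ {i})` in any other row `i`. -/
def mnArray (i : ι) (j : γ × {B : Finset ι // #B = Z}) :
    Option (γ × {T : Finset ι // #T = Z + 1}) :=
  if h : i ∈ j.2.1 then none
  else some (j.1, ⟨insert i j.2.1, by rw [card_insert_of_notMem h, j.2.2]⟩)

variable {γ ι Z}

theorem mnArray_eq_none_iff {i : ι} {j : γ × {B : Finset ι // #B = Z}} :
    mnArray γ ι Z i j = none ↔ i ∈ j.2.1 := by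
  unfold mnArray; split_ifs with h <;> simp [h]

theorem mnArray_eq_some_iff {i : ι} {j : γ × {B : Finset ι // #B = Z}}
    {s : γ × {T : Finset ι // #T = Z + 1}} :
    mnArray γ ι Z i j = some s ↔ i ∉ j.2.1 ∧ j.1 = s.1 ∧ insert i j.2.1 = s.2.1 := by
  unfold mnArray; split_ifs with h
  · simp [h]
  · simp [h, Prod.ext_iff, Subtype.ext_iff]

theorem isPDAOn_mnArray [Fintype ι] : IsPDAOn Z (mnArray γ ι Z) := by
  have col_unique : ∀ i j j' s, mnArray γ ι Z i j = some s → mnArray γ ι Z i j' = some s →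
      j = j' := by
    intro i j j' s h₁ h₂
    rw [mnArray_eq_some_iff] at h₁ h₂
    refine Prod.ext (h₁.2.1.trans h₂.2.1.symm) (Subtype.ext ?_)
    rw [← erase_insert h₁.1, ← erase_insert h₂.1, h₁.2.2, h₂.2.2]
  refine ⟨col_unique, fun i i' j s h₁ h₂ => ?_, fun a c b d s hne h₁ h₂ => ?_, fun j => ?_⟩
  · rw [mnArray_eq_some_iff] at h₁ h₂
    by_contra hne
    exact h₁.1 (mem_of_insert_eq_insert (h₁.2.2.trans h₂.2.2.symm) hne)
  · have hac : a ≠ c := by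
      rintro rfl
      exact hne (by rw [col_unique a b d s h₁ h₂])
    rw [mnArray_eq_some_iff] at h₁ h₂
    have hT := h₁.2.2.trans h₂.2.2.symm
    exact ⟨mnArray_eq_none_iff.2 (mem_of_insert_eq_insert hT hac),
      mnArray_eq_none_iff.2 (mem_of_insert_eq_insert hT.symm hac.symm)⟩
  · simpa only [mnArray_eq_none_iff, filter_mem_eq_inter, univ_inter] using j.2.2

end MaddahAliNiesen

theorem pda_optimal_multiple_binomial_general (F Z m : ℕ) (hZF : Z < F) :
    PDAExists (m * F.choose Z) F Z (m * F.choose (Z + 1)) ∧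
      ¬ PDAExists (m * F.choose Z + 1) F Z (m * F.choose (Z + 1)) := by
  refine ⟨PDAExists.of_isPDAOn (isPDAOn_mnArray (γ := Fin m) (ι := Fin F)) (by simp) (by simp),
    fun h => ?_⟩
  have hS : (Z + 1) * (m * F.choose (Z + 1)) = m * F.choose Z * (F - Z) := by
    rw [mul_left_comm, mul_comm (Z + 1), Nat.choose_succ_right_eq, ← mul_assoc]
  have hbound := h.mul_sub_le
  rw [hS] at hbound
  exact hbound.not_gt (Nat.mul_lt_mul_of_pos_right (Nat.lt_succ_self _) (Nat.sub_pos_of_lt hZF))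

theorem pda_optimal_multiple_binomial (F Z m : ℕ) (hZF : Z < F) (hm : 1 ≤ m) :
    PDAExists (m * F.choose Z) F Z (m * F.choose (Z + 1)) ∧
      ¬ PDAExists (m * F.choose Z + 1) F Z (m * F.choose (Z + 1)) :=
  pda_optimal_multiple_binomial_general F Z m hZF
end

section
/- Let F ≥ 2 and m ≥ 1 be integers. Then the maximum K for which a (K, F, F−2, mF+2)-PDA exists equals m·F·(F−1)/2 + ⌊F/2⌋; i.e., K_{(F,2,mF+2)} = m·K_{(F,2,F)} + K_{(F,2,2)}. -/
/-!
Read each column of a `(K, F, F - 2, S)`-PDA as an edge joining its two non-star rows. Fix a row `v`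
with `r` non-star entries and let `B` be the set of symbols standing opposite `v` in these columns.
The cross condition makes `B` disjoint from the `r` symbols of row `v`, so `r + |B| ≤ S`; and a
symbol of `B` stands opposite `v` in at most `F - 1` columns, since its occurrences lie in distinct
rows other than `v`, so `r ≤ (F - 1) |B|`. Together `r F ≤ (F - 1) S`, which for `S = m F + 2`
means `r ≤ m (F - 1) + 1`; summing over the rows, `2 K ≤ F (m (F - 1) + 1)`.

The bound is attained by `m` copies of the complete-graph array (the column of an edge `{x, y}`
carries `y` in row `x` and `x` in row `y`), each with its own `F` symbols, next to `⌊F / 2⌋` columns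
of a matching whose edges `{2k, 2k + 1}` all carry the same two symbols.
-/

open Finset

theorem card_filter_not_eq_sub {α : Type*} [Fintype α] {p : α → Prop} [DecidablePred p] {n : ℕ}
    (h : (univ.filter p).card = n) : (univ.filter fun a => ¬p a).card = Fintype.card α - n := by
  rw [← h, ← card_univ, ← card_filter_add_card_filter_not (s := univ) p, Nat.add_sub_cancel_left]

def IsPDAOn_s11 {ι κ σ : Type*} [Fintype ι] [DecidableEq σ] (Z : ℕ) (P : ι → κ → Option σ) :
    Prop :=
  (∀ (i : ι) (j j' : κ) (s : σ), P i j = some s → P i j' = some s → j = j') ∧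
  (∀ (i i' : ι) (j : κ) (s : σ), P i j = some s → P i' j = some s → i = i') ∧
  (∀ (a c : ι) (b d : κ) (s : σ),
      (a, b) ≠ (c, d) → P a b = some s → P c d = some s →
      P a d = none ∧ P c b = none) ∧
  (∀ j : κ, (univ.filter (fun i => P i j = none)).card = Z)

theorem isPDA_iff_isPDAOn {K F Z S : ℕ} {P : Fin F → Fin K → Option (Fin S)} :
    IsPDA K F Z S P ↔ IsPDAOn_s11 Z P :=
  Iff.rfl

section RowSets

variable {ι κ σ : Type*} [Fintype κ] [DecidableEq σ] (P : ι → κ → Option σ)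

def nonStarCols (i : ι) : Finset κ :=
  univ.filter fun j => P i j ≠ none

def rowSymbols (i : ι) : Finset (Option σ) :=
  (nonStarCols P i).image (P i)

def partnerCells [Fintype ι] [DecidableEq ι] (i : ι) : Finset (ι × κ) :=
  univ.filter fun c => c.1 ≠ i ∧ P i c.2 ≠ none ∧ P c.1 c.2 ≠ none

def partnerSymbols [Fintype ι] [DecidableEq ι] (i : ι) : Finset (Option σ) :=
  (partnerCells P i).image fun c => P c.1 c.2

end RowSets

namespace IsPDAOn_s11

variable {ι κ σ : Type*} [Fintype ι] [DecidableEq σ] {Z : ℕ} {P : ι → κ → Option σ}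

theorem card_filter_ne_none (h : IsPDAOn_s11 Z P) (j : κ) :
    (univ.filter (fun i => P i j ≠ none)).card = Fintype.card ι - Z :=
  card_filter_not_eq_sub (h.2.2.2 j)

theorem reindex {κ' σ' : Type*} [DecidableEq σ'] (h : IsPDAOn_s11 Z P) (e : κ' ≃ κ) (f : σ ↪ σ') :
    IsPDAOn_s11 Z fun i j => (P i (e j)).map f := by
  obtain ⟨hrow, hcol, hcross, hstar⟩ := h
  refine ⟨?_, ?_, ?_, fun j => by simpa using hstar (e j)⟩ <;>
    simp only [Option.map_eq_some_iff, Option.map_eq_none_iff]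
  · rintro i j j' _ ⟨s, hs, rfl⟩ ⟨s', hs', hss'⟩
    rw [f.injective hss'] at hs'
    exact e.injective (hrow i _ _ s hs hs')
  · rintro i i' j _ ⟨s, hs, rfl⟩ ⟨s', hs', hss'⟩
    rw [f.injective hss'] at hs'
    exact hcol i i' _ s hs hs'
  · rintro a c b d _ hne ⟨s, hs, rfl⟩ ⟨s', hs', hss'⟩
    rw [f.injective hss'] at hs'
    exact hcross a c (e b) (e d) s (by simpa using hne) hs hs'

theorem pdaExists {F : ℕ} {κ σ : Type*} [Fintype κ] [Fintype σ] [DecidableEq σ]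
    {P : Fin F → κ → Option σ} (h : IsPDAOn_s11 Z P) :
    PDAExists (Fintype.card κ) F Z (Fintype.card σ) :=
  ⟨_, h.reindex (Fintype.equivFin κ).symm (Fintype.equivFin σ).toEmbedding⟩

theorem sum {κ' σ' : Type*} [DecidableEq σ'] {Q : ι → κ' → Option σ'} (hP : IsPDAOn_s11 Z P)
    (hQ : IsPDAOn_s11 Z Q) :
    IsPDAOn_s11 Z fun i => Sum.elim (fun j => (P i j).map Sum.inl) (fun j => (Q i j).map Sum.inr) := by
  obtain ⟨hrow, hcol, hcross, hstar⟩ := hP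
  obtain ⟨hrow', hcol', hcross', hstar'⟩ := hQ
  refine ⟨?_, ?_, ?_, ?_⟩
  · rintro i (j | j) (j' | j') (s | s) <;> simp
    · exact hrow i j j' s
    · exact hrow' i j j' s
  · rintro i i' (j | j) (s | s) <;> simp
    · exact hcol i i' j s
    · exact hcol' i i' j s
  · rintro a c (b | b) (d | d) (s | s) <;> simp
    · simpa using hcross a c b d s
    · simpa using hcross' a c b d s
  · rintro (j | j) <;> simp [hstar, hstar']

variable [Fintype κ]

theorem sum_card_nonStarCols (h : IsPDAOn_s11 Z P) :
    ∑ i, (nonStarCols P i).card = Fintype.card κ * (Fintype.card ι - Z) := by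
  have := sum_card_bipartiteAbove_eq_sum_card_bipartiteBelow (s := (univ : Finset ι))
    (t := (univ : Finset κ)) (fun i j => P i j ≠ none)
  simp only [bipartiteAbove, bipartiteBelow, h.card_filter_ne_none] at this
  simpa [nonStarCols, mul_comm] using this

theorem card_rowSymbols (h : IsPDAOn_s11 Z P) (i : ι) :
    (rowSymbols P i).card = (nonStarCols P i).card := by
  refine card_image_of_injOn fun j hj j' _ hjj' => ?_
  obtain ⟨s, hs⟩ := Option.ne_none_iff_exists'.mp (mem_filter.mp hj).2
  exact h.1 i j j' s hs (hjj'.symm.trans hs)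

theorem disjoint_rowSymbols_partnerSymbols [DecidableEq ι] (h : IsPDAOn_s11 Z P) (i : ι) :
    Disjoint (rowSymbols P i) (partnerSymbols P i) := by
  simp only [disjoint_left, rowSymbols, partnerSymbols, mem_image, nonStarCols, partnerCells,
    mem_filter, mem_univ, true_and, not_exists, not_and]
  rintro _ ⟨j, hj, rfl⟩ ⟨w, j'⟩ ⟨hw, hij', -⟩ hsame
  obtain ⟨s, hs⟩ := Option.ne_none_iff_exists'.mp hj
  exact hij' (h.2.2.1 w i j' j s (fun he => hw (congrArg Prod.fst he)) (hsame.trans hs) hs).2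

theorem card_nonStarCols_add_card_partnerSymbols_le [DecidableEq ι] [Fintype σ]
    (h : IsPDAOn_s11 Z P) (i : ι) :
    (nonStarCols P i).card + (partnerSymbols P i).card ≤ Fintype.card σ := by
  rw [← h.card_rowSymbols, ← card_union_of_disjoint (h.disjoint_rowSymbols_partnerSymbols i)]
  calc _ ≤ (univ.erase (none : Option σ)).card := by
        refine card_le_card fun s hs => mem_erase.mpr ⟨?_, mem_univ s⟩
        simp only [mem_union, rowSymbols, partnerSymbols, mem_image, nonStarCols, partnerCells,
          mem_filter] at hs
        rcases hs with ⟨j, hj, rfl⟩ | ⟨c, hc, rfl⟩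
        exacts [hj.2, hc.2.2.2]
    _ = Fintype.card σ := by simp

theorem card_nonStarCols_le_card_partnerCells [DecidableEq ι] (h : IsPDAOn_s11 Z P)
    (hZ : Z + 2 ≤ Fintype.card ι) (i : ι) :
    (nonStarCols P i).card ≤ (partnerCells P i).card := by
  refine card_le_card_of_surjOn Prod.snd fun j hj => ?_
  have hi : P i j ≠ none := (mem_filter.mp hj).2
  have htwo : 1 < (univ.filter fun w => P w j ≠ none).card := by
    rw [h.card_filter_ne_none]
    omega
  obtain ⟨w, hw, hwi⟩ := exists_mem_ne htwo i
  exact ⟨(w, j), mem_filter.mpr ⟨mem_univ _, hwi, hi, (mem_filter.mp hw).2⟩, rfl⟩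

theorem card_partnerCells_le [DecidableEq ι] (h : IsPDAOn_s11 Z P) (i : ι) :
    (partnerCells P i).card ≤ (Fintype.card ι - 1) * (partnerSymbols P i).card := by
  rw [← card_univ, ← card_erase_of_mem (mem_univ i), ← card_product]
  refine card_le_card_of_injOn (fun c => (c.1, P c.1 c.2)) (fun c hc => ?_) ?_
  · exact mem_product.mpr ⟨mem_erase.mpr ⟨(mem_filter.mp hc).2.1, mem_univ _⟩,
      mem_image_of_mem _ hc⟩
  · rintro ⟨w, j⟩ hc ⟨w', j'⟩ - hcc'
    simp only [Prod.mk.injEq] at hcc'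
    obtain ⟨rfl, hs⟩ := hcc'
    obtain ⟨s, hs'⟩ := Option.ne_none_iff_exists'.mp (mem_filter.mp hc).2.2.2
    rw [h.1 w j j' s hs' (hs.symm.trans hs')]

theorem card_nonStarCols_mul_le [DecidableEq ι] [Fintype σ] (h : IsPDAOn_s11 Z P)
    (hZ : Z + 2 ≤ Fintype.card ι) (i : ι) :
    (nonStarCols P i).card * Fintype.card ι ≤ (Fintype.card ι - 1) * Fintype.card σ := by
  have hle := (h.card_nonStarCols_le_card_partnerCells hZ i).trans (h.card_partnerCells_le i)
  have hadd := h.card_nonStarCols_add_card_partnerSymbols_le i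
  set n := Fintype.card ι - 1
  rw [show Fintype.card ι = n + 1 by omega]
  nlinarith [Nat.mul_le_mul_left n hadd]

theorem card_nonStarCols_le [DecidableEq ι] [Fintype σ] {m : ℕ} (h : IsPDAOn_s11 Z P)
    (hZ : Z + 2 ≤ Fintype.card ι) (hσ : Fintype.card σ = m * Fintype.card ι + 2) (i : ι) :
    (nonStarCols P i).card ≤ m * (Fintype.card ι - 1) + 1 := by
  have hmul := h.card_nonStarCols_mul_le hZ i
  set n := Fintype.card ι - 1
  rw [hσ, show Fintype.card ι = n + 1 by omega] at hmul
  nlinarith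

theorem card_mul_le [DecidableEq ι] [Fintype σ] {m : ℕ} (h : IsPDAOn_s11 Z P)
    (hZ : Z + 2 ≤ Fintype.card ι) (hσ : Fintype.card σ = m * Fintype.card ι + 2) :
    Fintype.card κ * (Fintype.card ι - Z) ≤ Fintype.card ι * (m * (Fintype.card ι - 1) + 1) := by
  rw [← h.sum_card_nonStarCols, ← card_univ, ← smul_eq_mul, ← sum_const]
  exact sum_le_sum fun i _ => h.card_nonStarCols_le hZ hσ i

end IsPDAOn_s11

theorem PDAExists.add {K₁ K₂ F Z S₁ S₂ : ℕ} (h₁ : PDAExists K₁ F Z S₁)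
    (h₂ : PDAExists K₂ F Z S₂) : PDAExists (K₁ + K₂) F Z (S₁ + S₂) := by
  obtain ⟨P, hP⟩ := h₁
  obtain ⟨Q, hQ⟩ := h₂
  simpa using (IsPDAOn_s11.sum hP hQ).pdaExists

theorem PDAExists.mul_left {K F Z S : ℕ} (h : PDAExists K F Z S) (m : ℕ) :
    PDAExists (m * K) F Z (m * S) := by
  induction m with
  | zero =>
    rw [zero_mul, zero_mul]
    exact ⟨fun _ j => j.elim0, fun _ j => j.elim0, fun _ _ j => j.elim0,
      fun _ _ b => b.elim0, fun j => j.elim0⟩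
  | succ m ih => simpa [Nat.succ_mul] using ih.add h

section CompleteGraph

variable (α : Type*) [DecidableEq α]

def completeGraphPDA (x : α) (e : {z : Sym2 α // ¬z.IsDiag}) : Option α :=
  if h : x ∈ e.1 then some (Sym2.Mem.other' h) else none

variable {α}

theorem completeGraphPDA_eq_some {x y : α} {e : {z : Sym2 α // ¬z.IsDiag}} :
    completeGraphPDA α x e = some y ↔ e.1 = s(x, y) := by
  unfold completeGraphPDA
  split_ifs with h
  · rw [Option.some_inj, ← Sym2.congr_right, Sym2.other_spec' h, eq_comm]
  · exact iff_of_false (by simp) fun he => h (he ▸ Sym2.mem_mk_left x y)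

theorem completeGraphPDA_eq_none {x : α} {e : {z : Sym2 α // ¬z.IsDiag}} :
    completeGraphPDA α x e = none ↔ x ∉ e.1 := by
  unfold completeGraphPDA
  split_ifs with h <;> simpa

theorem isPDAOn_completeGraphPDA [Fintype α] :
    IsPDAOn_s11 (Fintype.card α - 2) (completeGraphPDA α) := by
  simp only [IsPDAOn_s11, completeGraphPDA_eq_some, completeGraphPDA_eq_none]
  refine ⟨?_, ?_, ?_, ?_⟩
  · intro i j j' s hj hj'
    exact Subtype.ext (hj.trans hj'.symm)
  · intro i i' j s hi hi'
    exact Sym2.congr_left.mp (hi.symm.trans hi')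
  · intro a c b d s hne hb hd
    have hoff : ∀ {x} {e : {z : Sym2 α // ¬z.IsDiag}}, e.1 = s(x, s) → x ≠ s :=
      fun {_ e} he hx => e.2 (he ▸ hx ▸ Sym2.mk_isDiag_iff.mpr rfl)
    have hac : a ≠ c := by
      rintro rfl
      exact hne (by rw [Subtype.ext (hb.trans hd.symm)])
    rw [hb, hd, Sym2.mem_iff, Sym2.mem_iff]
    exact ⟨by rintro (h | h); exacts [hac h, hoff hb h],
      by rintro (h | h); exacts [hac h.symm, hoff hd h]⟩
  · intro e
    refine card_filter_not_eq_sub ?_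
    rw [← Sym2.card_toFinset_of_not_isDiag e.1 e.2]
    congr
    ext
    simp [Sym2.mem_toFinset]

end CompleteGraph

theorem pdaExists_choose_two (F : ℕ) : PDAExists (F.choose 2) F (F - 2) F := by
  have h := (isPDAOn_completeGraphPDA (α := Fin F)).pdaExists
  rwa [Sym2.card_subtype_not_diag, Fintype.card_fin] at h

def matchingPDA (F : ℕ) (x : Fin F) (k : Fin (F / 2)) : Option (Fin 2) :=
  if x.val / 2 = k.val then some ⟨x.val % 2, Nat.mod_lt _ two_pos⟩ else none

theorem matchingPDA_eq_some {F : ℕ} {x : Fin F} {k : Fin (F / 2)} {s : Fin 2} :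
    matchingPDA F x k = some s ↔ x.val / 2 = k.val ∧ x.val % 2 = s.val := by
  unfold matchingPDA
  split_ifs with h <;> simp [h, Fin.ext_iff]

theorem matchingPDA_eq_none {F : ℕ} {x : Fin F} {k : Fin (F / 2)} :
    matchingPDA F x k = none ↔ x.val / 2 ≠ k.val := by
  unfold matchingPDA
  split_ifs with h <;> simpa

theorem isPDA_matchingPDA (F : ℕ) : IsPDA (F / 2) F (F - 2) 2 (matchingPDA F) := by
  simp only [IsPDA, matchingPDA_eq_some, matchingPDA_eq_none]
  refine ⟨?_, ?_, ?_, ?_⟩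
  · intro i j j' s hj hj'
    exact Fin.ext (by omega)
  · intro i i' j s hi hi'
    exact Fin.ext (by omega)
  · intro a c b d s hne hb hd
    simp only [ne_eq, Prod.mk.injEq, Fin.ext_iff] at hne
    omega
  · intro k
    have hk := k.isLt
    have hpair : univ.filter (fun x : Fin F => x.val / 2 = k.val) =
        {⟨2 * k, by omega⟩, ⟨2 * k + 1, by omega⟩} := by
      ext x
      simp only [mem_filter, mem_univ, true_and, mem_insert, mem_singleton, Fin.ext_iff]
      omega
    convert card_filter_not_eq_sub (p := fun x : Fin F => x.val / 2 = k.val) ?_ using 2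
    · rw [Fintype.card_fin]
    rw [hpair, card_pair (by simp [Fin.ext_iff])]

theorem pda_optimal_S_eq_mF_add_two_general (F m : ℕ) (hF : 2 ≤ F) :
    IsGreatest {K : ℕ | PDAExists K F (F - 2) (m * F + 2)}
      (m * F * (F - 1) / 2 + F / 2) := by
  have hdvd : 2 ∣ F * (F - 1) := (Nat.even_mul_pred_self F).two_dvd
  refine ⟨?_, ?_⟩
  · have h := ((pdaExists_choose_two F).mul_left m).add ⟨_, isPDA_matchingPDA F⟩
    rwa [Nat.choose_two_right, ← Nat.mul_div_assoc _ hdvd, ← mul_assoc] at h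
  · rintro K ⟨P, hP⟩
    have hK := (isPDA_iff_isPDAOn.mp hP).card_mul_le (m := m)
      (by simp only [Fintype.card_fin]; omega) (by simp)
    simp only [Fintype.card_fin, show F - (F - 2) = 2 by omega] at hK
    have hexpand : F * (m * (F - 1) + 1) = m * F * (F - 1) + F := by ring
    have hdvd' : 2 ∣ m * F * (F - 1) := mul_assoc m F (F - 1) ▸ hdvd.mul_left m
    omega

theorem pda_optimal_S_eq_mF_add_two (F m : ℕ) (hF : 2 ≤ F) (hm : 1 ≤ m) :
    IsGreatest {K : ℕ | PDAExists K F (F - 2) (m * F + 2)}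
      (m * F * (F - 1) / 2 + F / 2) :=
  pda_optimal_S_eq_mF_add_two_general F m hF
end
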